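/- For smooth compactly supported ψ : ℂ → ℂ, the Cauchy–Pompeiu reproducing formula holds: ψ(z) = (1/(2πi)) ∫_ℂ (∂̄ψ)(z') / (z - z') dz̄' ∧ dz' for all z ∈ ℂ. -/

import Mathlib

open MeasureTheory

noncomputable def dbar (ψ : ℂ → ℂ) (z : ℂ) : ℂ :=
  (1 / 2 : ℂ) * (fderiv ℝ ψ z 1 + Complex.I * fderiv ℝ ψ z Complex.I)

open Complex Set Filter

lemma lin_id (L : ℂ →L[ℝ] ℂ) (θ : ℝ) :
    (L (cexp (θ * I)) + I * L (cexp (θ * I) * I)) * cexp (θ * I) = L 1 + I * L I := by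
  have hL : ∀ x y : ℝ, L ((x:ℂ) + (y:ℂ) * I) = (x:ℂ) * L 1 + (y:ℂ) * L I := by
    intro x y
    have h : ((x:ℂ) + (y:ℂ) * I) = x • (1:ℂ) + y • I := by
      simp [Complex.real_smul]
    rw [h, map_add, L.map_smul, L.map_smul, Complex.real_smul, Complex.real_smul]
  have hc : cexp ((θ:ℂ) * I) = (Real.cos θ : ℂ) + (Real.sin θ : ℂ) * I := by
    rw [exp_mul_I, ofReal_cos, ofReal_sin]
  have hc2 : cexp ((θ:ℂ) * I) * I = ((-Real.sin θ : ℝ) : ℂ) + (Real.cos θ : ℂ) * I := by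
    rw [hc, ofReal_neg]
    have h2 : I ^ 2 = -1 := I_sq
    linear_combination (Real.sin θ : ℂ) * h2
  rw [hc2, hL, hc, hL, ofReal_neg]
  have h1 : (Real.sin θ : ℂ) ^ 2 + (Real.cos θ : ℂ) ^ 2 = 1 := by
    rw [← Complex.ofReal_pow, ← Complex.ofReal_pow, ← Complex.ofReal_add,
      Real.sin_sq_add_cos_sq, Complex.ofReal_one]
  have h2 : I ^ 2 = -1 := I_sq
  set a := L 1; set b := L I
  set c := (Real.cos θ : ℂ); set s := (Real.sin θ : ℂ)
  linear_combination (a + I * b) * h1 - (a + I * b) * s ^ 2 * h2 + (c * s * b + s ^ 2 * b * I) * h2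

/-- Cauchy–Pompeiu reproducing formula for smooth compactly supported `ψ : ℂ → ℂ`:
`ψ(z) = (1/(2πi)) ∫ (∂̄ψ)(z')/(z - z') dz̄' ∧ dz'`, equivalently (since
`dz̄' ∧ dz' = 2i dA(z')`) `ψ(z) = (1/π) ∫ (∂̄ψ)(z')/(z - z') dA(z')`. -/
theorem stmt_12 (ψ : ℂ → ℂ) (hψ : ContDiff ℝ (⊤ : ℕ∞) ψ) (hsupp : HasCompactSupport ψ) :
    ∀ z : ℂ, ψ z = (1 / (2 * Real.pi * Complex.I)) *
      ∫ z', (dbar ψ z' / (z - z')) * (2 * Complex.I) := by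
  intro z
  have hdψ : Differentiable ℝ ψ := hψ.differentiable (by simp)
  have hDc : Continuous (fderiv ℝ ψ) := (hψ.fderiv_right (m := 0) (by simp)).continuous
  -- support radius
  obtain ⟨M, hM⟩ : ∃ M, tsupport ψ ⊆ Metric.closedBall 0 M :=
    hsupp.isBounded.subset_closedBall 0
  set R : ℝ := |M| + ‖z‖ + 1 with hRdef
  have hR0 : 0 < R := by positivity
  have hout : ∀ r θ : ℝ, R ≤ r → z - (r : ℂ) * cexp (θ * I) ∉ tsupport ψ := by
    intro r θ hr hmem
    have h1 : ‖z - (r:ℂ) * cexp (θ * I)‖ ≤ M := by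
      simpa [Complex.dist_eq] using hM hmem
    have h2 : ‖(r:ℂ) * cexp (θ * I)‖ = |r| := by
      simp [norm_exp_ofReal_mul_I]
    have h3 : ‖(r:ℂ) * cexp (θ*I)‖ - ‖z‖
        ≤ ‖z - (r:ℂ) * cexp (θ * I)‖ := by
      have h := norm_sub_norm_le ((r:ℂ) * cexp (θ*I)) z
      rw [norm_sub_rev] at h
      simpa using h
    have hrR : |r| = r := abs_of_pos (lt_of_lt_of_le hR0 hr)
    have : M < M := by
      calc M < R - ‖z‖ := by
              have : M ≤ |M| := le_abs_self M
              simp only [hRdef]; linarith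
        _ ≤ r - ‖z‖ := by linarith
        _ = |r| - ‖z‖ := by rw [hrR]
        _ ≤ M := by rw [← h2] at *; linarith
    exact lt_irrefl _ this
  have hzero : ∀ r θ : ℝ, R ≤ r → fderiv ℝ ψ (z - (r:ℂ) * cexp (θ * I)) = 0 := by
    intro r θ hr
    by_contra h
    exact hout r θ hr (support_fderiv_subset ℝ h)
  -- the two pieces
  set e : ℝ → ℂ := fun θ => cexp (θ * I) with he
  set u : ℝ × ℝ → ℂ := fun p => z - (p.1 : ℂ) * e p.2 with hu
  set A : ℝ × ℝ → ℂ := fun p => fderiv ℝ ψ (u p) (-(e p.2)) with hA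
  set B : ℝ × ℝ → ℂ := fun p => I * fderiv ℝ ψ (u p) (-(e p.2 * I)) with hB
  have hecont : Continuous e := by
    exact Complex.continuous_exp.comp ((Complex.continuous_ofReal).mul continuous_const)
  have hucont : Continuous u := by
    exact continuous_const.sub ((Complex.continuous_ofReal.comp continuous_fst).mul
      (hecont.comp continuous_snd))
  have hAcont : Continuous A := (hDc.comp hucont).clm_apply (hecont.comp continuous_snd).neg
  have hBcont : Continuous B := continuous_const.mul
    ((hDc.comp hucont).clm_apply ((hecont.comp continuous_snd).mul continuous_const).neg)
  set s : Set ℝ := Ioc 0 R with hs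
  set t : Set ℝ := Ioo (-Real.pi) Real.pi with ht
  have hst_sub : s ×ˢ t ⊆ Icc 0 R ×ˢ Icc (-Real.pi) Real.pi :=
    Set.prod_mono Ioc_subset_Icc_self Ioo_subset_Icc_self
  have hK : IsCompact (Icc (0:ℝ) R ×ˢ Icc (-Real.pi) Real.pi) :=
    isCompact_Icc.prod isCompact_Icc
  have hAint : IntegrableOn A (s ×ˢ t) :=
    (hAcont.continuousOn.integrableOn_compact hK).mono_set hst_sub
  have hBint : IntegrableOn B (s ×ˢ t) :=
    (hBcont.continuousOn.integrableOn_compact hK).mono_set hst_sub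
  -- derivative in r
  have hder_r : ∀ (θ : ℝ) (r : ℝ), HasDerivAt (fun r : ℝ => ψ (z - (r:ℂ) * e θ))
      (A (r, θ)) r := by
    intro θ r
    have h1 : HasDerivAt (fun r : ℝ => ((r : ℂ))) 1 r := by
      simpa using (hasDerivAt_id r).ofReal_comp
    have h2 : HasDerivAt (fun r : ℝ => z - (r:ℂ) * e θ) (-(e θ)) r := by
      simpa using (h1.mul_const (e θ)).const_sub z
    have h3 := (hdψ _).hasFDerivAt.comp_hasDerivAt r h2
    simpa [Function.comp_def, hA, hu, ContinuousLinearMap.map_neg] using h3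
  -- derivative in θ
  have hder_θ : ∀ (r : ℝ) (_ : r ≠ 0) (θ : ℝ),
      HasDerivAt (fun θ : ℝ => ((r:ℂ))⁻¹ * I * ψ (z - (r:ℂ) * e θ)) (B (r, θ)) θ := by
    intro r hr θ
    have h1 : HasDerivAt (fun θ : ℝ => ((θ : ℂ)) * I) I θ := by
      simpa using (Complex.ofRealCLM.hasDerivAt (x := θ)).mul_const I
    have h2 : HasDerivAt e (e θ * I) θ := h1.cexp
    have h3 : HasDerivAt (fun θ : ℝ => z - (r:ℂ) * e θ) (-((r:ℂ) * (e θ * I))) θ := by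
      simpa using (h2.const_mul ((r:ℂ))).const_sub z
    have h4 := ((hdψ _).hasFDerivAt.comp_hasDerivAt θ h3).const_mul (((r:ℂ))⁻¹ * I)
    have h5 : -((r:ℂ) * (e θ * I)) = r • (-(e θ * I)) := by
      rw [Complex.real_smul]; ring
    rw [h5, ContinuousLinearMap.map_smul] at h4
    have h6 : ((r:ℂ))⁻¹ * I * (r • fderiv ℝ ψ (z - (r:ℂ) * e θ) (-(e θ * I))) = B (r, θ) := by
      rw [Complex.real_smul]
      have : ((r:ℂ)) ≠ 0 := by exact_mod_cast hr
      simp only [hB, hu]; field_simp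
    rw [h6] at h4
    simpa [Function.comp] using h4
  -- core integral
  have core : (∫ z', dbar ψ z' / (z - z')) = (Real.pi : ℂ) * ψ z := by
    set F : ℝ × ℝ → ℂ := fun p => -(1/2 : ℂ) * (A p + B p) with hF
    have step1 : (∫ z', dbar ψ z' / (z - z')) = ∫ w, dbar ψ (z - w) / w := by
      have h := integral_sub_left_eq_self (fun w => dbar ψ (z - w) / w) volume z
      simpa [sub_sub_cancel] using h
    have step2 : (∫ w, dbar ψ (z - w) / w) = ∫ p in _root_.polarCoord.target,
        p.1 • (dbar ψ (z - Complex.polarCoord.symm p) / Complex.polarCoord.symm p) :=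
      (Complex.integral_comp_polarCoord_symm fun w => dbar ψ (z - w) / w).symm
    have hFeq : Set.EqOn (fun p : ℝ × ℝ =>
        p.1 • (dbar ψ (z - Complex.polarCoord.symm p) / Complex.polarCoord.symm p)) F
        _root_.polarCoord.target := by
      rintro ⟨r, θ⟩ ⟨hr, hθ⟩
      have hr' : (0:ℝ) < r := hr
      have hsymm : Complex.polarCoord.symm (r, θ) = (r:ℂ) * e θ := by
        rw [Complex.polarCoord_symm_apply, he]
        simp only [exp_mul_I, ofReal_cos, ofReal_sin]
      have hrne : ((r:ℂ)) ≠ 0 := by exact_mod_cast hr'.ne'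
      have hene : e θ ≠ 0 := Complex.exp_ne_zero _
      have hlin := lin_id (fderiv ℝ ψ (z - (r:ℂ) * e θ)) θ
      simp only [he] at hlin ⊢
      simp only [hsymm, hF, hA, hB, hu, he, dbar, Complex.real_smul,
        ContinuousLinearMap.map_neg]
      rw [← hlin]
      field_simp
      ring
    have step3 : (∫ p in _root_.polarCoord.target,
        p.1 • (dbar ψ (z - Complex.polarCoord.symm p) / Complex.polarCoord.symm p))
        = ∫ p in _root_.polarCoord.target, F p :=
      setIntegral_congr_fun _root_.polarCoord.open_target.measurableSet hFeq
    have step4 : (∫ p in _root_.polarCoord.target, F p) = ∫ p in s ×ˢ t, F p := by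
      apply setIntegral_eq_of_subset_of_forall_diff_eq_zero
        _root_.polarCoord.open_target.measurableSet
      · rw [_root_.polarCoord_target]
        exact Set.prod_mono Ioc_subset_Ioi_self subset_rfl
      · rintro ⟨r, θ⟩ ⟨hmem, hnot⟩
        rw [_root_.polarCoord_target] at hmem
        obtain ⟨hr, hθ⟩ := hmem
        have hRr : R ≤ r := by
          by_contra hc
          push_neg at hc
          exact hnot ⟨⟨hr, hc.le⟩, hθ⟩
        have h0 := hzero r θ hRr
        simp only [hF, hA, hB, hu, he] at *
        rw [h0]
        simp
    have step5 : (∫ p in s ×ˢ t, F p)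
        = -(1/2 : ℂ) * ((∫ p in s ×ˢ t, A p) + ∫ p in s ×ˢ t, B p) := by
      simp only [hF]
      rw [MeasureTheory.integral_const_mul, integral_add hAint hBint]
    have hBzero : (∫ p in s ×ˢ t, B p) = 0 := by
      rw [Measure.volume_eq_prod, ← Measure.prod_restrict]
      rw [MeasureTheory.integral_prod _ (by
        rw [Measure.prod_restrict, ← Measure.volume_eq_prod]; exact hBint)]
      apply MeasureTheory.integral_eq_zero_of_ae
      filter_upwards [MeasureTheory.ae_restrict_mem (by rw [hs]; exact measurableSet_Ioc :
        MeasurableSet s)] with r hr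
      obtain ⟨hr0, hrR⟩ : r ∈ Ioc 0 R := by rw [hs] at hr; exact hr
      have hfte : ∫ θ in t, B (r, θ) = ∫ θ in Set.Ioo (-Real.pi) Real.pi, B (r, θ) := by
        rw [ht]
      rw [hfte, ← MeasureTheory.integral_Ioc_eq_integral_Ioo,
        ← intervalIntegral.integral_of_le (by linarith [Real.pi_pos])]
      rw [intervalIntegral.integral_eq_sub_of_hasDerivAt
        (f := fun θ : ℝ => ((r:ℂ))⁻¹ * I * ψ (z - (r:ℂ) * e θ))
        (fun x _ => hder_θ r hr0.ne' x)
        ((hBcont.comp (continuous_const.prodMk continuous_id)).intervalIntegrable _ _)]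
      have hepi : e Real.pi = -1 := by rw [he]; exact Complex.exp_pi_mul_I
      have henpi : e (-Real.pi) = -1 := by
        rw [he]
        simp only [ofReal_neg, neg_mul, Complex.exp_neg, Complex.exp_pi_mul_I]
        norm_num
      rw [hepi, henpi, sub_self]
      rfl
    have hAval : (∫ p in s ×ˢ t, A p) = (Real.pi + Real.pi : ℝ) • (-ψ z) := by
      rw [Measure.volume_eq_prod, ← Measure.prod_restrict]
      rw [MeasureTheory.integral_prod_symm _ (by
        rw [Measure.prod_restrict, ← Measure.volume_eq_prod]; exact hAint)]
      have hinner : ∀ θ ∈ t, (∫ r in s, A (r, θ)) = -ψ z := by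
        intro θ hθ
        rw [hs, ← intervalIntegral.integral_of_le hR0.le]
        rw [intervalIntegral.integral_eq_sub_of_hasDerivAt
          (f := fun r : ℝ => ψ (z - (r:ℂ) * e θ)) (fun x _ => hder_r θ x)
          ((hAcont.comp (continuous_id.prodMk continuous_const)).intervalIntegrable _ _)]
        have hend : ψ (z - (R:ℂ) * e θ) = 0 :=
          image_eq_zero_of_notMem_tsupport (by rw [he] at *; exact hout R θ le_rfl)
        rw [hend]
        simp
      have hrw := setIntegral_congr_fun (μ := volume) (s := t)
        (by rw [ht]; exact measurableSet_Ioo) (g := fun _ => -ψ z) hinner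
      rw [hrw, setIntegral_const]
      congr 1
      rw [ht, measureReal_def, Real.volume_Ioo]
      rw [ENNReal.toReal_ofReal (by linarith [Real.pi_pos])]
      ring
    rw [step1, step2, step3, step4, step5, hBzero, hAval]
    simp only [Complex.real_smul]
    push_cast
    ring
  rw [MeasureTheory.integral_mul_const, core]
  have hπ : (Real.pi : ℂ) ≠ 0 := by exact_mod_cast Real.pi_ne_zero
  field_simp
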